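/- Let $E$ be a row-finite directed graph with no sources, $R$ an integral domain, $n$ a normalizer of the diagonal $D(E)$ in $A_R(G_E)$, and $x$ an infinite path in $\operatorname{supp}(n)$ (identifying units with infinite paths). Then $r(\operatorname{supp}(n) \cdot \{x\})$, the set of ranges of elements of $\operatorname{supp}(n)$ with source $x$, is a singleton. -/

import Mathlib

open scoped Classical BigOperators

namespace LPA

structure DirGraph where
  V : Type
  E : Type
  r : E → V
  s : E → V

structure InfPath (G : DirGraph) where
  edges : ℕ → G.E
  compat : ∀ i, G.s (edges i) = G.r (edges (i + 1))

structure FinPath (G : DirGraph) where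
  len : ℕ
  vtx : G.V
  edges : ℕ → G.E
  compat : ∀ i, i + 1 < len → G.s (edges i) = G.r (edges (i + 1))
  vtx_eq : 0 < len → vtx = G.r (edges 0)

variable {G : DirGraph}

/-- The source vertex of a finite path (its `vtx` if it has length `0`). -/
def FinPath.src (μ : FinPath G) : G.V :=
  if μ.len = 0 then μ.vtx else G.s (μ.edges (μ.len - 1))

/-- The range vertex of an infinite path. -/
def InfPath.rng (x : InfPath G) : G.V := G.r (x.edges 0)

/-- `x ∼ₖ y`: shift equivalence with lag `k`. -/
def ShiftEquiv (x : InfPath G) (k : ℤ) (y : InfPath G) : Prop :=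
  ∃ a b N : ℕ, (a : ℤ) - (b : ℤ) = k ∧ ∀ i, N ≤ i → x.edges (i + a) = y.edges (i + b)

def RowFinite (G : DirGraph) : Prop := ∀ v : G.V, {e : G.E | G.r e = v}.Finite

def NoSources (G : DirGraph) : Prop := ∀ v : G.V, ∃ e : G.E, G.r e = v

/-- `x = μ z`: the infinite path `x` is the concatenation of the finite path `μ`
with the infinite path `z`. -/
def IsConcat (μ : FinPath G) (z x : InfPath G) : Prop :=
  z.rng = μ.src ∧ ∀ i, x.edges i = if i < μ.len then μ.edges i else z.edges (i - μ.len)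

/-- `ρ = μ β`: concatenation of finite paths. -/
def IsAppendF (μ β ρ : FinPath G) : Prop :=
  ρ.len = μ.len + β.len ∧ (∀ i < μ.len, ρ.edges i = μ.edges i) ∧
    (∀ i < β.len, ρ.edges (μ.len + i) = β.edges i) ∧
    ρ.vtx = if μ.len = 0 then β.vtx else μ.vtx

/-- Triples `(x, k, y)`: the ambient type of the graph groupoid. -/
abbrev GTrip (G : DirGraph) := InfPath G × ℤ × InfPath G

def gmul (g h : GTrip G) : GTrip G := (g.1, g.2.1 + h.2.1, h.2.2)
def ginv (g : GTrip G) : GTrip G := (g.2.2, -g.2.1, g.1)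
def unit (x : InfPath G) : GTrip G := (x, 0, x)

def GraphGroupoid (G : DirGraph) : Set (GTrip G) :=
  {g | ShiftEquiv g.1 g.2.1 g.2.2}

/-- `BC` for subsets of the groupoid. -/
def setMul (B C : Set (GTrip G)) : Set (GTrip G) :=
  {g | ∃ γ ∈ B, ∃ η ∈ C, γ.2.2 = η.1 ∧ g = gmul γ η}

def setInv (B : Set (GTrip G)) : Set (GTrip G) := ginv '' B

/-- The cylinder set `Z(μ)` of infinite paths extending `μ`. -/
def Zset (μ : FinPath G) : Set (InfPath G) :=
  {x | (∀ i < μ.len, x.edges i = μ.edges i) ∧ x.rng = μ.vtx}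

/-- The basic compact open bisection `Z(μ,ν) = {(μz, |μ|-|ν|, νz)}`. -/
def ZZ (μ ν : FinPath G) : Set (GTrip G) :=
  {g | ∃ z : InfPath G, IsConcat μ z g.1 ∧ IsConcat ν z g.2.2 ∧
    g.2.1 = (μ.len : ℤ) - (ν.len : ℤ)}

instance : TopologicalSpace (InfPath G) :=
  TopologicalSpace.generateFrom {S | ∃ μ : FinPath G, S = Zset μ}

def unitSet (S : Set (InfPath G)) : Set (GTrip G) := {g | ∃ x ∈ S, g = unit x}

variable (R : Type) [CommRing R]

/-- The diagonal `D(E)` of the Steinberg algebra. -/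
noncomputable def Diag (G : DirGraph) : Submodule R (GTrip G → R) :=
  Submodule.span R {f | ∃ μ : FinPath G, f = Set.indicator (unitSet (Zset μ)) 1}

/-- The Steinberg algebra `A_R(G_E)` as a set of functions on the groupoid. -/
noncomputable def Steinberg (G : DirGraph) : Submodule R (GTrip G → R) :=
  Submodule.span R
    {f | ∃ μ ν : FinPath G, μ.src = ν.src ∧ f = Set.indicator (ZZ μ ν) 1}

variable {R}

/-- Convolution product. -/
noncomputable def conv (f g : GTrip G → R) : GTrip G → R :=
  fun γ => ∑ᶠ η ∈ {η : GTrip G | η.1 = γ.1}, f η * g (gmul (ginv η) γ)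

/-- Involution `f^*(γ) = star (f (γ⁻¹))`. -/
def starf [StarRing R] (f : GTrip G → R) : GTrip G → R :=
  fun γ => star (f (ginv γ))

/-- `n` is a normalizer of the diagonal. -/
def IsNormalizer [StarRing R] (n : GTrip G → R) : Prop :=
  n ∈ Steinberg R G ∧ ∀ d ∈ Diag R G,
    conv (conv n d) (starf n) ∈ Diag R G ∧ conv (conv (starf n) d) n ∈ Diag R G

/-- `α_n(x) = r(supp(n) x)` (given by a choice; unique for normalizers). -/
noncomputable def alphaFun (n : GTrip G → R) (x : InfPath G) : InfPath G :=
  if h : ∃ g : GTrip G, n g ≠ 0 ∧ g.2.2 = x then h.choose.1 else x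

/-- `dom(n) = supp(n^* n)`, as a subset of the infinite path space. -/
noncomputable def domSet [StarRing R] (n : GTrip G → R) : Set (InfPath G) :=
  {x | conv (starf n) n (unit x) ≠ 0}

/-- `ran(n) = supp(n n^*)`, as a subset of the infinite path space. -/
noncomputable def ranSet [StarRing R] (n : GTrip G → R) : Set (InfPath G) :=
  {x | conv n (starf n) (unit x) ≠ 0}

/-- `d ∘ α_n`, viewed as a function on the groupoid vanishing off `s(supp n)`. -/
noncomputable def dAlpha (d n : GTrip G → R) : GTrip G → R := fun g =>
  if (g.2.1 = 0 ∧ g.1 = g.2.2 ∧ ∃ h : GTrip G, n h ≠ 0 ∧ h.2.2 = g.2.2)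
  then d (unit (alphaFun n g.2.2)) else 0

/-- `p_x`, the characteristic function of the unit `{x}`. -/
noncomputable def ppt (R : Type) [CommRing R] (x : InfPath G) : GTrip G → R :=
  Set.indicator {unit x} 1

/-- `f` is homogeneous of degree `k`. -/
def Homog (k : ℤ) (f : GTrip G → R) : Prop := ∀ g : GTrip G, f g ≠ 0 → g.2.1 = k

def IsCycle (η : FinPath G) : Prop :=
  0 < η.len ∧ η.src = η.vtx ∧
    ∀ i j, 0 < i → i + 1 < η.len → 0 < j → j + 1 < η.len → i ≠ j →
      G.s (η.edges i) ≠ G.r (η.edges j)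

def HasEntrance (η : FinPath G) : Prop :=
  ∃ (e : G.E) (i : ℕ), i < η.len ∧ G.r e = G.r (η.edges i) ∧ e ≠ η.edges i

/-- `z = η η η ⋯`. -/
def IsPeriodicOf (η : FinPath G) (z : InfPath G) : Prop :=
  ∀ i, z.edges i = η.edges (i % η.len)

/-! Suppose `n (y, a, x) ≠ 0` with `y ≠ x`. Since `n` has finite fibres over the range map and
`n (x, 0, x) ≠ 0`, there are a maximal `a₀` with `n (y, a₀, x) ≠ 0` and a minimal `b₀` with
`n (x, b₀, x) ≠ 0`. Take a cylinder `U ∋ x` so small that it contains no other source of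
`supp n ∩ r⁻¹(y)`. In `n 1_U n^*` the value at `(y, a₀ - b₀, x)` is then the single product
`n (y, a₀, x) · star (n (x, b₀, x))`, nonzero over a domain; yet `n 1_U n^*` lies in the diagonal,
which vanishes off the unit space. -/

section Normalizer

variable {G : DirGraph} {R : Type} [CommRing R]

theorem _root_.finsum_mem_eq_of_support_subset_singleton {α M : Type*} [AddCommMonoid M]
    {f : α → M} {s : Set α} {a : α} (ha : a ∈ s) (hf : ∀ b ∈ s, f b ≠ 0 → b = a) :
    ∑ᶠ i ∈ s, f i = f a := by
  rw [finsum_mem_eq_sum_of_subset f (t := {a}) (fun b hb => Finset.mem_singleton.2 (hf b hb.1 hb.2))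
    (by simpa using ha), Finset.sum_singleton]

theorem InfPath.ext {z w : InfPath G} (h : z.edges = w.edges) : z = w := by
  cases z; cases w; subst h; rfl

def InfPath.prefix (x : InfPath G) (m : ℕ) : FinPath G :=
  ⟨m, x.rng, x.edges, fun i _ => x.compat i, fun _ => rfl⟩

theorem InfPath.mem_Zset_prefix (x : InfPath G) (m : ℕ) : x ∈ Zset (x.prefix m) :=
  ⟨fun _ _ => rfl, rfl⟩

theorem InfPath.Zset_prefix_antitone (x : InfPath G) {m m' : ℕ} (h : m ≤ m') :
    Zset (x.prefix m') ⊆ Zset (x.prefix m) :=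
  fun _ hz => ⟨fun i hi => hz.1 i (hi.trans_le h), hz.2⟩

theorem InfPath.exists_prefix_separating {S : Set (InfPath G)} (hS : S.Finite) (x : InfPath G) :
    ∃ m, ∀ z ∈ S, z ∈ Zset (x.prefix m) → z = x := by
  induction S, hS using Set.Finite.induction_on with
  | empty => exact ⟨0, by simp⟩
  | @insert a S _ _ ih =>
    obtain ⟨m, hm⟩ := ih
    by_cases hax : a = x
    · exact ⟨m, by rintro z (rfl | hz); exacts [fun _ => hax, hm z hz]⟩
    obtain ⟨j, hj⟩ := Function.ne_iff.mp (mt InfPath.ext hax)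
    refine ⟨max m (j + 1), ?_⟩
    rintro z (rfl | hz) hzU
    · exact absurd (hzU.1 j (lt_max_of_lt_right j.lt_succ_self)) hj
    · exact hm z hz (x.Zset_prefix_antitone (le_max_left _ _) hzU)

theorem mem_unitSet_iff {S : Set (InfPath G)} {g : GTrip G} :
    g ∈ unitSet S ↔ g.1 ∈ S ∧ g.2.1 = 0 ∧ g.2.2 = g.1 := by
  constructor
  · rintro ⟨w, hw, rfl⟩
    exact ⟨hw, rfl, rfl⟩
  · rintro ⟨h1, h2, h3⟩
    exact ⟨g.1, h1, by simp [unit, Prod.ext_iff, h2, h3]⟩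

theorem unit_mem_unitSet_iff {S : Set (InfPath G)} {x : InfPath G} :
    unit x ∈ unitSet S ↔ x ∈ S := by
  simp [mem_unitSet_iff, unit]

theorem eq_zero_of_mem_Diag {f : GTrip G → R} (hf : f ∈ Diag R G) {γ : GTrip G}
    (hγ : γ.1 ≠ γ.2.2) : f γ = 0 := by
  induction hf using Submodule.span_induction with
  | mem f hf =>
    obtain ⟨μ, rfl⟩ := hf
    exact Set.indicator_of_notMem (fun h => hγ (mem_unitSet_iff.mp h).2.2.symm) _
  | zero => rfl
  | add f g _ _ hf hg => simp [hf, hg]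
  | smul c f _ hf => simp [hf]

theorem IsConcat.tail_unique {μ : FinPath G} {z z' x : InfPath G} (h : IsConcat μ z x)
    (h' : IsConcat μ z' x) : z = z' := by
  refine InfPath.ext (funext fun i => ?_)
  have hi := h.2 (i + μ.len)
  have hi' := h'.2 (i + μ.len)
  rw [if_neg (by omega), Nat.add_sub_cancel] at hi hi'
  exact hi.symm.trans hi'

theorem IsConcat.unique {μ : FinPath G} {z x x' : InfPath G} (h : IsConcat μ z x)
    (h' : IsConcat μ z x') : x = x' :=
  InfPath.ext (funext fun i => by rw [h.2 i, h'.2 i])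

theorem ZZ_fiber_subsingleton (μ ν : FinPath G) (y : InfPath G) :
    {g : GTrip G | g ∈ ZZ μ ν ∧ g.1 = y}.Subsingleton := by
  rintro ⟨y₁, k, w⟩ ⟨⟨z, hz, hw, hk⟩, rfl⟩ ⟨y₂, k', w'⟩ ⟨⟨z', hz', hw', hk'⟩, h⟩
  dsimp only at h hz hz' hw hw' hk hk'
  subst h
  obtain rfl := hz.tail_unique hz'
  rw [hw.unique hw', hk, hk']

theorem finite_fiber_of_mem_Steinberg {f : GTrip G → R} (hf : f ∈ Steinberg R G)
    (y : InfPath G) : {g : GTrip G | f g ≠ 0 ∧ g.1 = y}.Finite := by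
  induction hf using Submodule.span_induction with
  | mem f hf =>
    obtain ⟨μ, ν, -, rfl⟩ := hf
    refine (ZZ_fiber_subsingleton μ ν y).finite.subset fun g hg => ⟨?_, hg.2⟩
    by_contra h
    exact hg.1 (Set.indicator_of_notMem h _)
  | zero => simp
  | add f g _ _ hf hg =>
    exact (hf.union hg).subset fun a ⟨ha, hy⟩ =>
      (Function.support_add f g ha).imp (⟨·, hy⟩) (⟨·, hy⟩)
  | smul c f _ hf =>
    exact hf.subset fun a ⟨ha, hy⟩ => ⟨Function.support_const_smul_subset c f ha, hy⟩

theorem conv_indicator_unitSet_apply (f : GTrip G → R) (U : Set (InfPath G)) (η : GTrip G) :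
    conv f (Set.indicator (unitSet U) 1) η = if η.2.2 ∈ U then f η else 0 := by
  unfold conv
  rw [finsum_mem_eq_of_support_subset_singleton (s := {ζ : GTrip G | ζ.1 = η.1}) rfl]
  · have hη : gmul (ginv η) η = unit η.2.2 := by simp [gmul, ginv, unit]
    simp [hη, Set.indicator_apply, unit_mem_unitSet_iff]
  · rintro ζ hζ hne
    obtain ⟨-, hk, hx⟩ :=
      mem_unitSet_iff.mp (Set.mem_of_indicator_ne_zero (right_ne_zero_of_mul hne))
    simp only [gmul, ginv] at hk hx
    exact Prod.ext hζ (Prod.ext (by omega) hx.symm)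

theorem conv_conv_indicator_starf_apply_of_extremal [StarRing R] {n : GTrip G → R}
    {U : Set (InfPath G)} {x y : InfPath G} {a₀ b₀ : ℤ} (hxU : x ∈ U)
    (hU : ∀ a z, n (y, a, z) ≠ 0 → z ∈ U → z = x)
    (ha₀ : ∀ a, n (y, a, x) ≠ 0 → a ≤ a₀) (hb₀ : ∀ b, n (x, b, x) ≠ 0 → b₀ ≤ b) :
    conv (conv n (Set.indicator (unitSet U) 1)) (starf n) (y, a₀ - b₀, x)
      = n (y, a₀, x) * star (n (x, b₀, x)) := by
  have hstar : ∀ η : GTrip G, starf n (gmul (ginv η) (y, a₀ - b₀, x))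
      = star (n (x, η.2.1 - (a₀ - b₀), η.2.2)) := fun η => by
    simp only [starf, gmul, ginv, neg_add_rev, neg_neg]
    ring_nf
  rw [conv, finsum_mem_eq_of_support_subset_singleton (s := {η : GTrip G | η.1 = y})
    (a := (y, a₀, x)) rfl, hstar, conv_indicator_unitSet_apply, if_pos hxU, sub_sub_cancel]
  rintro ⟨y', a, z⟩ (rfl : y' = y) hne
  rw [hstar, conv_indicator_unitSet_apply] at hne
  by_cases hzU : z ∈ U
  · rw [if_pos hzU] at hne
    have hnz := left_ne_zero_of_mul hne
    obtain rfl := hU a z hnz hzU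
    have hb := hb₀ _ (star_ne_zero.mp (right_ne_zero_of_mul hne))
    have ha := ha₀ a hnz
    rw [show a = a₀ by dsimp only at hb; omega]
  · simp [hzU] at hne

theorem eq_of_mem_support_of_isNormalizer [IsDomain R] [StarRing R] {n : GTrip G → R}
    (hn : IsNormalizer n) {x y : InfPath G} {a : ℤ} (hx : n (unit x) ≠ 0) (hy : n (y, a, x) ≠ 0) :
    y = x := by
  by_contra hyx
  have hfin : ∀ v w : InfPath G, {k : ℤ | n (v, k, w) ≠ 0}.Finite := fun v w =>
    ((finite_fiber_of_mem_Steinberg hn.1 v).image fun g => g.2.1).subset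
      fun k hk => ⟨(v, k, w), ⟨hk, rfl⟩, rfl⟩
  obtain ⟨a₀, ha₀, ha₀_max⟩ := Set.exists_max_image _ id (hfin y x) ⟨a, hy⟩
  obtain ⟨b₀, hb₀, hb₀_min⟩ := Set.exists_min_image _ id (hfin x x) ⟨0, hx⟩
  obtain ⟨m, hm⟩ := InfPath.exists_prefix_separating
    ((finite_fiber_of_mem_Steinberg hn.1 y).image fun g => g.2.2) x
  have hd : Set.indicator (unitSet (Zset (x.prefix m))) 1 ∈ Diag R G :=
    Submodule.subset_span ⟨x.prefix m, rfl⟩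
  have hvanish := eq_zero_of_mem_Diag (hn.2 _ hd).1 (γ := (y, a₀ - b₀, x)) hyx
  rw [conv_conv_indicator_starf_apply_of_extremal (a₀ := a₀) (b₀ := b₀) (x.mem_Zset_prefix m)
    (fun a z ha hz => hm z ⟨(y, a, z), ⟨ha, rfl⟩, rfl⟩ hz) ha₀_max hb₀_min] at hvanish
  exact mul_ne_zero ha₀ (star_ne_zero.mpr hb₀) hvanish

end Normalizer

end LPA

open LPA in
theorem range_supp_singleton_general {G : DirGraph}
    {R : Type} [CommRing R] [IsDomain R] [StarRing R]
    (n : GTrip G → R) (hn : IsNormalizer n) (x : InfPath G)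
    (hx : unit x ∈ Function.support n) :
    ∃ y : InfPath G,
      {v : InfPath G | ∃ g ∈ Function.support n, g.2.2 = x ∧ g.1 = v} = {y} := by
  refine ⟨x, Set.eq_singleton_iff_unique_mem.mpr ⟨⟨unit x, hx, rfl, rfl⟩, ?_⟩⟩
  rintro v ⟨⟨v, a, x⟩, hg, rfl, rfl⟩
  exact eq_of_mem_support_of_isNormalizer hn hx hg

open LPA in
/-- For a normalizer `n` and a unit `x` in `supp(n)`, the set `r(supp(n)x)` is a singleton. -/
theorem range_supp_singleton {G : DirGraph} (hrf : RowFinite G) (hns : NoSources G)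
    {R : Type} [CommRing R] [IsDomain R] [StarRing R]
    (n : GTrip G → R) (hn : IsNormalizer n) (x : InfPath G)
    (hx : unit x ∈ Function.support n) :
    ∃ y : InfPath G,
      {v : InfPath G | ∃ g ∈ Function.support n, g.2.2 = x ∧ g.1 = v} = {y} :=
  range_supp_singleton_general n hn x hx
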